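/- For m, n ≥ 1, removing the first and last steps of both boundary paths defines a bijection φ from m × n parallelogram polyominoes to (m−1) × (n−1) reduced parallelogram polyominoes, and for every polyomino P one has area(P) = area(φ(P)) + m + n − 1. -/
import Mathlib


open Finset

/-! ## Lattice-path preliminaries for parallelogram polyominoes.
Paths are lists of booleans: `true` = north step, `false` = east step. -/

/-- Interlacing `D = (r₁, 1-g₁, r₂, 1-g₂, …)` of the red path and the complemented green path. -/
def interlace : List Bool → List Bool → List Bool
  | [], _ => []
  | _ :: _, [] => []
  | a :: as, b :: bs => a :: (!b) :: interlace as bs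

/-- Reading levels along a 0/1 word: on a `true` record the current level and go up one level,
on a `false` go down one level (recording nothing). -/
def levels : List Bool → ℕ → List ℕ
  | [], _ => []
  | true :: rest, l => l :: levels rest (l + 1)
  | false :: rest, l => levels rest (l - 1)

def countTrue (l : List Bool) : ℕ := (l.filter fun b => b = true).length
def countFalse (l : List Bool) : ℕ := (l.filter fun b => b = false).length

/-- The number of `true`s (north steps) occurring before the `(x+1)`-st `false` (east step):
the height of the path along the column `x ↦ x+1`. -/
def colHeight : List Bool → ℕ → ℕ
  | [], _ => 0
  | true :: rest, k => colHeight rest k + 1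
  | false :: _, 0 => 0
  | false :: rest, k + 1 => colHeight rest k

/-- The number of `false`s (east steps) occurring before the `(y+1)`-st `true` (north step). -/
def colX (p : List Bool) (y : ℕ) : ℕ := colHeight (p.map fun b => !b) y

/-- `r` and `g` are the red (upper) and green (lower) boundary paths of an `m × n`
parallelogram polyomino: both go from `(0,0)` to `(m,n)` and the red one stays strictly
above the green one except at the endpoints. -/
def IsPolyo (m n : ℕ) (r g : List Bool) : Prop :=
  r.length = m + n ∧ g.length = m + n ∧ countTrue r = n ∧ countTrue g = n ∧
    ∀ i : ℕ, 1 ≤ i → i < m + n → countTrue (g.take i) < countTrue (r.take i)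

/-- Reduced parallelogram polyomino: the red path stays weakly above the green one. -/
def IsRPolyo (m n : ℕ) (r g : List Bool) : Prop :=
  r.length = m + n ∧ g.length = m + n ∧ countTrue r = n ∧ countTrue g = n ∧
    ∀ i : ℕ, countTrue (g.take i) ≤ countTrue (r.take i)

/-- The area word of a (standard) parallelogram polyomino, as the list of letters of the
alphabet `0̄ < 1 < 1̄ < 2 < 2̄ < ⋯` encoded by their indices `0, 1, 2, 3, 4, …`.
Barred letters have even index, unbarred letters odd index. -/
def areaWord (r g : List Bool) : List ℕ := levels (interlace r g) 0

/-- The numerical value of the letter with index `j` in the alphabet `0̄ < 1 < 1̄ < 2 < ⋯`. -/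
def wval (j : ℕ) : ℕ := (j + 1) / 2

/-- The number of unit cells strictly between the two boundary paths. -/
def cellArea (m : ℕ) (r g : List Bool) : ℕ :=
  ∑ x ∈ Finset.range m, (colHeight r x - colHeight g x)

/-- `area` as the sum of the values of the letters of the area word. -/
def areaStat (r g : List Bool) : ℕ := ((areaWord r g).map wval).sum

/-- `dinv`: the number of pairs of letters of the area word such that the rightmost letter is
the successor (in the alphabet `0̄ < 1 < 1̄ < ⋯`) of the leftmost one. -/
def dinvStat (r g : List Bool) : ℕ :=
  ((Finset.range (areaWord r g).length ×ˢ Finset.range (areaWord r g).length).filter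
    fun p => p.1 < p.2 ∧ (areaWord r g).getD p.2 0 = (areaWord r g).getD p.1 0 + 1).card

/-- A rise of the area word: a barred letter immediately followed by its successor. -/
def IsRise (w : List ℕ) (i : ℕ) : Prop :=
  i + 1 < w.length ∧ w.getD i 0 % 2 = 0 ∧ w.getD (i + 1) 0 = w.getD i 0 + 1

/-- `underlined area`: the sum of the values of the letters of the area word, ignoring the
(barred) letters at the decorated positions `D`. -/
def uareaStat (r g : List Bool) (D : Finset ℕ) : ℕ :=
  ∑ i ∈ Finset.range (areaWord r g).length \ D, wval ((areaWord r g).getD i 0)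



/-! ### Auxiliary lemmas -/

lemma countTrue_nil : countTrue [] = 0 := rfl

lemma countTrue_cons (b : Bool) (p : List Bool) :
    countTrue (b :: p) = (if b then 1 else 0) + countTrue p := by
  cases b <;> simp [countTrue, List.filter, Nat.add_comm]

lemma countFalse_cons (b : Bool) (p : List Bool) :
    countFalse (b :: p) = (if b then 0 else 1) + countFalse p := by
  cases b <;> simp [countFalse, List.filter, Nat.add_comm]

lemma countTrue_append (p q : List Bool) :
    countTrue (p ++ q) = countTrue p + countTrue q := by
  simp [countTrue, List.filter_append]

lemma countFalse_append (p q : List Bool) :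
    countFalse (p ++ q) = countFalse p + countFalse q := by
  simp [countFalse, List.filter_append]

lemma countTrue_add_countFalse (p : List Bool) :
    countTrue p + countFalse p = p.length := by
  induction p with
  | nil => rfl
  | cons b p ih => cases b <;> simp [countTrue_cons, countFalse_cons] <;> omega

lemma colHeight_append_false (p : List Bool) (x : ℕ) :
    colHeight (p ++ [false]) x = colHeight p x := by
  induction p generalizing x with
  | nil => cases x <;> rfl
  | cons b p ih =>
    cases b with
    | true => simp only [List.cons_append, List.append_eq, colHeight, ih]
    | false => cases x with
      | zero => rfl
      | succ x => simp only [List.cons_append, List.append_eq, colHeight, ih]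

lemma colHeight_append_true (p : List Bool) (x : ℕ) (h : x < countFalse p) :
    colHeight (p ++ [true]) x = colHeight p x := by
  induction p generalizing x with
  | nil => simp [countFalse] at h
  | cons b p ih =>
    cases b with
    | true =>
      rw [countFalse_cons] at h
      simp only [List.cons_append, List.append_eq, colHeight, ih]
      simp at h
      rw [ih x h]
    | false => cases x with
      | zero => rfl
      | succ x =>
        rw [countFalse_cons] at h; simp at h
        simp only [List.cons_append, List.append_eq, colHeight]
        exact ih x (by omega)

lemma colHeight_of_countFalse_le (p : List Bool) (x : ℕ) (h : countFalse p ≤ x) :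
    colHeight p x = countTrue p := by
  induction p generalizing x with
  | nil => rfl
  | cons b p ih =>
    cases b with
    | true =>
      rw [countFalse_cons] at h; simp at h
      simp [colHeight, countTrue_cons, ih x h, Nat.add_comm]
    | false =>
      rw [countFalse_cons] at h; simp at h
      cases x with
      | zero => omega
      | succ x => simp [colHeight, countTrue_cons, ih x (by omega)]

lemma colHeight_ge (p : List Bool) (x i : ℕ) (h : countFalse (p.take i) ≤ x) :
    countTrue (p.take i) ≤ colHeight p x := by
  induction p generalizing x i with
  | nil => simp [countTrue]
  | cons b p ih =>
    cases i with
    | zero => simp [countTrue]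
    | succ i =>
      cases b with
      | true =>
        simp only [List.take_succ_cons, countFalse_cons, countTrue_cons] at *
        simp at h ⊢
        have := ih x i (by omega)
        simp [colHeight]
        omega
      | false =>
        simp only [List.take_succ_cons, countFalse_cons, countTrue_cons] at *
        simp at h ⊢
        cases x with
        | zero => omega
        | succ x => simpa [colHeight] using ih x i (by omega)

lemma colHeight_exists (p : List Bool) (x : ℕ) :
    ∃ i, countFalse (p.take i) ≤ x ∧ countTrue (p.take i) = colHeight p x := by
  induction p generalizing x with
  | nil => exact ⟨0, by simp [countFalse, countTrue, colHeight]⟩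
  | cons b p ih =>
    cases b with
    | true =>
      obtain ⟨i, h1, h2⟩ := ih x
      exact ⟨i + 1, by simpa [countFalse_cons] using h1,
        by simp [countTrue_cons, colHeight, h2, Nat.add_comm]⟩
    | false =>
      cases x with
      | zero => exact ⟨0, by simp [countFalse, countTrue, colHeight]⟩
      | succ x =>
        obtain ⟨i, h1, h2⟩ := ih x
        exact ⟨i + 1, by simp [countFalse_cons]; omega,
          by simpa [countTrue_cons, colHeight] using h2⟩

lemma colHeight_mono (r g : List Bool) (hl : r.length = g.length)
    (h : ∀ i, countTrue (g.take i) ≤ countTrue (r.take i)) (x : ℕ) :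
    colHeight g x ≤ colHeight r x := by
  obtain ⟨i, h1, h2⟩ := colHeight_exists g x
  rw [← h2]
  refine le_trans (h i) (colHeight_ge r x i ?_)
  have e1 := countTrue_add_countFalse (r.take i)
  have e2 := countTrue_add_countFalse (g.take i)
  have : (r.take i).length = (g.take i).length := by simp [hl]
  have := h i
  omega


lemma take_one_countTrue (p : List Bool) (hp : p ≠ []) :
    countTrue (p.take 1) = if p.head hp then 1 else 0 := by
  cases p with
  | nil => simp at hp
  | cons b q => cases b <;> simp [countTrue]

lemma dropLast_countTrue (p : List Bool) (hp : p ≠ []) :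
    countTrue p = countTrue p.dropLast + (if p.getLast hp then 1 else 0) := by
  conv_lhs => rw [← List.dropLast_append_getLast hp]
  rw [countTrue_append]
  cases h : p.getLast hp <;> simp [countTrue]

lemma take_pred_eq_dropLast (p : List Bool) :
    p.take (p.length - 1) = p.dropLast := by
  rw [List.dropLast_eq_take]

/-- decomposition of a polyomino -/
lemma polyo_decomp {m n : ℕ} {r g : List Bool} (hm : 1 ≤ m) (hn : 1 ≤ n)
    (h : IsPolyo m n r g) :
    r = true :: ((r.drop 1).dropLast ++ [false]) ∧
    g = false :: ((g.drop 1).dropLast ++ [true]) := by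
  obtain ⟨hr, hg, hrn, hgn, h5⟩ := h
  have hlen : 2 ≤ m + n := by omega
  obtain ⟨a, t, rfl⟩ : ∃ a t, r = a :: t := by
    cases r with
    | nil => simp at hr; omega
    | cons a t => exact ⟨a, t, rfl⟩
  obtain ⟨c, s, rfl⟩ : ∃ c s, g = c :: s := by
    cases g with
    | nil => simp at hg; omega
    | cons c s => exact ⟨c, s, rfl⟩
  have ht : t ≠ [] := by intro e; rw [e] at hr; simp at hr; omega
  have hs : s ≠ [] := by intro e; rw [e] at hg; simp at hg; omega
  -- first steps
  have h1 := h5 1 le_rfl (by omega)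
  simp only [List.take_succ_cons, List.take_zero] at h1
  have ha : a = true := by
    cases a
    · cases c <;> simp [countTrue] at h1
    · rfl
  have hc : c = false := by
    cases c
    · rfl
    · cases a <;> simp [countTrue] at h1
  subst ha hc
  -- last steps
  have h2 := h5 (m + n - 1) (by omega) (by omega)
  have hrt : (true :: t).take (m + n - 1) = (true :: t).dropLast := by
    rw [← hr]; exact take_pred_eq_dropLast _
  have hgt : (false :: s).take (m + n - 1) = (false :: s).dropLast := by
    rw [← hg]; exact take_pred_eq_dropLast _
  rw [hrt, hgt] at h2
  have e1 := dropLast_countTrue (true :: t) (by simp)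
  have e2 := dropLast_countTrue (false :: s) (by simp)
  have hgl : (true :: t).getLast (by simp) = t.getLast ht := List.getLast_cons ht
  have hgl2 : (false :: s).getLast (by simp) = s.getLast hs := List.getLast_cons hs
  rw [hgl] at e1
  rw [hgl2] at e2
  have hrl : t.getLast ht = false := by
    by_contra hb; rw [Bool.not_eq_false] at hb
    rw [hb] at e1; simp at e1
    revert e2; split <;> (intro e2; omega)
  have hsl : s.getLast hs = true := by
    by_contra hb; rw [Bool.not_eq_true] at hb
    rw [hb] at e2; simp at e2
    rw [hrl] at e1; simp at e1
    omega
  constructor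
  · simp only [List.drop_one, List.tail_cons, List.cons.injEq, true_and]
    conv_lhs => rw [← List.dropLast_append_getLast ht]
    rw [hrl]
  · simp only [List.drop_one, List.tail_cons, List.cons.injEq, true_and]
    conv_lhs => rw [← List.dropLast_append_getLast hs]
    rw [hsl]

lemma countTrue_true_cons (l : List Bool) : countTrue (true :: l) = countTrue l + 1 := by
  simp [countTrue]

lemma countTrue_false_cons (l : List Bool) : countTrue (false :: l) = countTrue l := by
  simp [countTrue]

lemma countTrue_take_le (l : List Bool) (i : ℕ) : countTrue (l.take i) ≤ countTrue l := by
  conv_rhs => rw [← List.take_append_drop i l]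
  rw [countTrue_append]
  omega

lemma isRPolyo_of_isPolyo {m n : ℕ} {r g : List Bool}
    (h : IsPolyo (m + 1) (n + 1) (true :: (r ++ [false])) (false :: (g ++ [true]))) :
    IsRPolyo m n r g := by
  obtain ⟨hr, hg, hrn, hgn, h5⟩ := h
  simp at hr hg
  rw [countTrue_true_cons, countTrue_append] at hrn
  rw [countTrue_false_cons, countTrue_append] at hgn
  have e1 : countTrue [false] = 0 := rfl
  have e2 : countTrue [true] = 1 := rfl
  rw [e1] at hrn
  rw [e2] at hgn
  refine ⟨by omega, by omega, by omega, by omega, fun i => ?_⟩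
  rcases le_or_gt i (m + n) with hi | hi
  · have h6 := h5 (i + 1) (by omega) (by omega)
    rw [List.take_succ_cons, List.take_succ_cons,
      List.take_append_of_le_length (by omega),
      List.take_append_of_le_length (by omega), countTrue_true_cons,
      countTrue_false_cons] at h6
    omega
  · rw [List.take_of_length_le (by omega), List.take_of_length_le (by omega)]
    omega

lemma isPolyo_of_isRPolyo {m n : ℕ} {r g : List Bool} (h : IsRPolyo m n r g) :
    IsPolyo (m + 1) (n + 1) (true :: (r ++ [false])) (false :: (g ++ [true])) := by
  obtain ⟨hr, hg, hrn, hgn, h5⟩ := h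
  have e1 : countTrue [false] = 0 := rfl
  have e2 : countTrue [true] = 1 := rfl
  refine ⟨by simp; omega, by simp; omega, ?_, ?_, fun i hi1 hi2 => ?_⟩
  · rw [countTrue_true_cons, countTrue_append, e1]; omega
  · rw [countTrue_false_cons, countTrue_append, e2]; omega
  · obtain ⟨j, rfl⟩ : ∃ j, i = j + 1 := ⟨i - 1, by omega⟩
    rw [List.take_succ_cons, List.take_succ_cons,
      List.take_append_of_le_length (by omega),
      List.take_append_of_le_length (by omega), countTrue_true_cons,
      countTrue_false_cons]
    have := h5 j
    omega
lemma colHeight_true_cons (p : List Bool) (x : ℕ) :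
    colHeight (true :: p) x = colHeight p x + 1 := rfl

lemma colHeight_false_cons_succ (p : List Bool) (x : ℕ) :
    colHeight (false :: p) (x + 1) = colHeight p x := rfl

lemma colHeight_mono_of_rpolyo {m n : ℕ} {r g : List Bool} (h : IsRPolyo m n r g) (x : ℕ) :
    colHeight g x ≤ colHeight r x := by
  obtain ⟨hr, hg, hrn, hgn, h5⟩ := h
  exact colHeight_mono r g (by omega) h5 x

lemma area_eq {m n : ℕ} {r g : List Bool} (h : IsRPolyo m n r g) :
    cellArea (m + 1) (true :: (r ++ [false])) (false :: (g ++ [true])) =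
      cellArea m r g + (m + n + 1) := by
  obtain ⟨hr, hg, hrn, hgn, h5⟩ := h
  have hrf : countFalse r = m := by have := countTrue_add_countFalse r; omega
  have hgf : countFalse g = m := by have := countTrue_add_countFalse g; omega
  have hmono : ∀ x, colHeight g x ≤ colHeight r x :=
    colHeight_mono_of_rpolyo ⟨hr, hg, hrn, hgn, h5⟩
  have hR : ∀ x, colHeight (true :: (r ++ [false])) x = colHeight r x + 1 := fun x => by
    rw [colHeight_true_cons, colHeight_append_false]
  have hG0 : colHeight (false :: (g ++ [true])) 0 = 0 := rfl
  have hG : ∀ x, x < m → colHeight (false :: (g ++ [true])) (x + 1) = colHeight g x :=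
    fun x hx => by
      rw [colHeight_false_cons_succ, colHeight_append_true g x (by omega)]
  unfold cellArea
  rw [Finset.sum_range_succ']
  have step1 : ∀ x ∈ Finset.range m,
      colHeight (true :: (r ++ [false])) (x + 1) -
        colHeight (false :: (g ++ [true])) (x + 1) =
      (colHeight r (x + 1) + 1) - colHeight g x := by
    intro x hx
    rw [hR, hG x (Finset.mem_range.mp hx)]
  rw [Finset.sum_congr rfl step1, hG0, hR 0]
  have hle : ∀ x ∈ Finset.range m, colHeight g x ≤ colHeight r (x + 1) + 1 := by
    intro x hx
    calc colHeight g x ≤ colHeight r x := hmono x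
      _ ≤ colHeight r (x + 1) + 1 := by
        obtain ⟨i, h1, h2⟩ := colHeight_exists r x
        rw [← h2]
        exact le_trans (colHeight_ge r (x+1) i (by omega)) (by omega)
  have hle' : ∀ x ∈ Finset.range m, colHeight g x ≤ colHeight r x :=
    fun x _ => hmono x
  rw [Finset.sum_tsub_distrib _ hle, Finset.sum_tsub_distrib _ hle']
  have sumr : ∑ x ∈ Finset.range m, (colHeight r (x + 1) + 1) =
      (∑ x ∈ Finset.range m, colHeight r x) + n + m - colHeight r 0 := by
    rw [Finset.sum_add_distrib, Finset.sum_const, smul_eq_mul, mul_one]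
    have : ∑ x ∈ Finset.range m, colHeight r (x + 1) =
        (∑ x ∈ Finset.range (m + 1), colHeight r x) - colHeight r 0 := by
      rw [Finset.sum_range_succ']
      omega
    rw [this, Finset.sum_range_succ, colHeight_of_countFalse_le r m (by omega), hrn,
      Finset.card_range]
    have h0 : colHeight r 0 ≤ ∑ x ∈ Finset.range (m+1), colHeight r x := by
      apply Finset.single_le_sum (f := fun x => colHeight r x) (fun _ _ => Nat.zero_le _)
      simp
    rw [Finset.sum_range_succ, colHeight_of_countFalse_le r m (by omega), hrn] at h0
    omega
  rw [sumr]
  have hsub : ∀ x ∈ Finset.range m, colHeight g x ≤ colHeight r x := hle'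
  have hsum_le : ∑ x ∈ Finset.range m, colHeight g x ≤ ∑ x ∈ Finset.range m, colHeight r x :=
    Finset.sum_le_sum hle'
  have h00 : colHeight g 0 ≤ colHeight r 0 := hmono 0
  have h0r : colHeight r 0 ≤ n := by
    rw [← hrn]
    obtain ⟨i, h1, h2⟩ := colHeight_exists r 0
    rw [← h2]
    exact countTrue_take_le r i
  omega


/-- Removing the first and last steps of both boundary paths is a bijection `φ` from `m × n`
parallelogram polyominoes to `(m-1) × (n-1)` reduced parallelogram polyominoes, and
`area(P) = area(φ(P)) + m + n − 1`. -/
theorem phi_bijection_reduced (m n : ℕ) (hm : 1 ≤ m) (hn : 1 ≤ n) :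
    ∃ e : { p : List Bool × List Bool // IsPolyo m n p.1 p.2 } ≃
        { p : List Bool × List Bool // IsRPolyo (m - 1) (n - 1) p.1 p.2 },
      ∀ P, ((e P).val.1 = (P.val.1.drop 1).dropLast ∧
            (e P).val.2 = (P.val.2.drop 1).dropLast) ∧
        cellArea m P.val.1 P.val.2 =
          cellArea (m - 1) (e P).val.1 (e P).val.2 + (m + n - 1) := by
  obtain ⟨m, rfl⟩ : ∃ m', m = m' + 1 := ⟨m - 1, by omega⟩
  obtain ⟨n, rfl⟩ : ∃ n', n = n' + 1 := ⟨n - 1, by omega⟩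
  simp only [Nat.add_sub_cancel]
  have key : ∀ P : { p : List Bool × List Bool // IsPolyo (m + 1) (n + 1) p.1 p.2 },
      P.val.1 = true :: ((P.val.1.drop 1).dropLast ++ [false]) ∧
      P.val.2 = false :: ((P.val.2.drop 1).dropLast ++ [true]) :=
    fun P => polyo_decomp (by omega) (by omega) P.prop
  have keyF : ∀ P : { p : List Bool × List Bool // IsPolyo (m + 1) (n + 1) p.1 p.2 },
      IsRPolyo m n (P.val.1.drop 1).dropLast (P.val.2.drop 1).dropLast := by
    intro P
    have h := P.prop
    rw [(key P).1, (key P).2] at h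
    exact isRPolyo_of_isPolyo h
  refine ⟨⟨fun P => ⟨((P.val.1.drop 1).dropLast, (P.val.2.drop 1).dropLast), keyF P⟩,
      fun Q => ⟨(true :: (Q.val.1 ++ [false]), false :: (Q.val.2 ++ [true])),
        isPolyo_of_isRPolyo Q.prop⟩, ?_, ?_⟩, ?_⟩
  · intro P
    apply Subtype.ext
    apply Prod.ext
    · exact (key P).1.symm
    · exact (key P).2.symm
  · intro Q
    apply Subtype.ext
    apply Prod.ext
    · simp [List.dropLast_concat]
    · simp [List.dropLast_concat]
  · intro P
    refine ⟨⟨rfl, rfl⟩, ?_⟩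
    have harea : cellArea (m + 1) P.val.1 P.val.2 =
        cellArea m (P.val.1.drop 1).dropLast (P.val.2.drop 1).dropLast + (m + n + 1) := by
      conv_lhs => rw [(key P).1, (key P).2]
      exact area_eq (keyF P)
    simp only [Equiv.coe_fn_mk]
    omega
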